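/- Let M be a real convex monoid, m ∈ M, and P ∈ D(M) with π(P) = m. Then IF(m) ≥ ∑_{x ∈ M} P(x)·IF(x), i.e., the invertible fraction is concave along convex decompositions. -/

import Mathlib

open Finsupp
open scoped Classical NNReal

/-- `p` is a finitely supported distribution: its values sum to `1`. -/
def IsDist {R X : Type*} [CommSemiring R] (p : X →₀ R) : Prop :=
  p.sum (fun _ r => r) = 1

/-- Convolution: `(q ∗ p)(m) = ∑_{g₂·g₁ = m} q(g₂) p(g₁)`. -/
noncomputable def dconv {R M : Type*} [CommSemiring R] [Monoid M]
    (q p : M →₀ R) : M →₀ R :=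
  q.sum fun g₂ b => p.sum fun g₁ a => Finsupp.single (g₂ * g₁) (b * a)

/-- The invertible support of `m`. -/
def Isupp {M : Type*} [Monoid M]
    (pm : (M →₀ ℝ≥0) → M) (m : M) : Set M :=
  {m' | IsUnit m' ∧ ∃ P : M →₀ ℝ≥0, IsDist P ∧ pm P = m ∧ P m' ≠ 0}

/-- `m` is weakly invertible if it is the image under `pm` of a distribution supported
on the units. -/
def WeaklyInv {M : Type*} [Monoid M]
    (pm : (M →₀ ℝ≥0) → M) (m : M) : Prop :=
  ∃ p : M →₀ ℝ≥0, IsDist p ∧ (∀ x ∈ p.support, IsUnit x) ∧ pm p = m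

/-- The total mass a distribution puts on the units of `M`. -/
noncomputable def unitMass {M : Type*} [Monoid M] (P : M →₀ ℝ≥0) : ℝ≥0 :=
  P.sum fun m' r => if IsUnit m' then r else 0

/-- The invertible fraction `IF(m) = sup {∑_{m'∈M*} P(m') : P ∈ D(M), pm(P) = m}`. -/
noncomputable def IF {M : Type*} [Monoid M]
    (pm : (M →₀ ℝ≥0) → M) (m : M) : ℝ≥0 :=
  sSup {s : ℝ≥0 | ∃ P : M →₀ ℝ≥0, IsDist P ∧ pm P = m ∧ s = unitMass P}

/-!
Given `ε > 0`, choose for every `x` a distribution `Q x` with `pm (Q x) = x` whose unit mass is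
within `ε` of `IF(x)`. Mixing these with the weights `P` gives the distribution `μ(D(Q)(P))`;
the algebra law `pm ∘ μ = pm ∘ D(pm)` shows that it still represents `m`, while its unit mass is
the `P`-average of the unit masses of the `Q x`. Hence `∑ P(x) IF(x) ≤ IF(m) + ε`.
-/

section Distributions

variable {R X : Type*} [CommSemiring R]

lemma isDist_single (x : X) : IsDist (single x (1 : R)) := by
  simp [IsDist]

lemma IsDist.sum_mul {p : X →₀ R} (hp : IsDist p) (c : R) : (p.sum fun _ r => r * c) = c := by
  rw [← Finsupp.sum_mul, hp, one_mul]

lemma IsDist.mapDomain {Y : Type*} {p : X →₀ R} (hp : IsDist p) (f : X → Y) :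
    IsDist (Finsupp.mapDomain f p) := by
  unfold IsDist
  rwa [sum_mapDomain_index (fun _ => rfl) (fun _ _ _ => rfl)]

/-- The multiplication `μ` of the distribution monad. -/
noncomputable def distJoin (Q : (X →₀ R) →₀ R) : X →₀ R :=
  Q.sum fun p r => r • p

lemma IsDist.distJoin {Q : (X →₀ R) →₀ R} (hQ : IsDist Q) (hp : ∀ p ∈ Q.support, IsDist p) :
    IsDist (distJoin Q) := by
  unfold IsDist _root_.distJoin
  rw [sum_sum_index (fun _ => rfl) (fun _ _ _ => rfl), ← hQ]
  refine Finsupp.sum_congr fun p hpQ => ?_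
  rw [sum_smul_index' (fun _ => rfl)]
  simpa [smul_eq_mul, ← Finsupp.mul_sum] using congrArg (Q p * ·) (hp p hpQ)

end Distributions

section InvertibleFraction

variable {M : Type*} [Monoid M]

lemma IsDist.unitMass_le_one {P : M →₀ ℝ≥0} (hP : IsDist P) : unitMass P ≤ 1 := by
  rw [← hP]
  exact Finset.sum_le_sum fun x _ => by dsimp only; split <;> simp

lemma unitMass_smul (r : ℝ≥0) (p : M →₀ ℝ≥0) : unitMass (r • p) = r * unitMass p := by
  unfold unitMass
  rw [sum_smul_index' (fun _ => by simp), Finsupp.mul_sum]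
  simp [mul_ite, smul_eq_mul]

lemma unitMass_distJoin (Q : (M →₀ ℝ≥0) →₀ ℝ≥0) :
    unitMass (distJoin Q) = Q.sum fun p r => r * unitMass p := by
  unfold distJoin
  conv_rhs => simp only [← unitMass_smul]
  unfold unitMass
  exact sum_sum_index (fun _ => by simp) (fun _ _ _ => by split <;> simp)

variable (pm : (M →₀ ℝ≥0) → M)

lemma bddAbove_unitMass (x : M) :
    BddAbove {s : ℝ≥0 | ∃ P : M →₀ ℝ≥0, IsDist P ∧ pm P = x ∧ s = unitMass P} :=
  ⟨1, fun _ ⟨_, hP, _, hs⟩ => hs ▸ hP.unitMass_le_one⟩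

lemma unitMass_le_IF {P : M →₀ ℝ≥0} (hP : IsDist P) : unitMass P ≤ IF pm (pm P) :=
  le_csSup (bddAbove_unitMass pm _) ⟨P, hP, rfl, rfl⟩

lemma exists_IF_le_unitMass_add {x : M} (hx : ∃ q, IsDist q ∧ pm q = x) {ε : ℝ≥0}
    (hε : 0 < ε) : ∃ q : M →₀ ℝ≥0, IsDist q ∧ pm q = x ∧ IF pm x ≤ unitMass q + ε := by
  obtain ⟨q₀, hq₀, hq₀x⟩ := hx
  rcases le_or_gt (IF pm x) ε with hsmall | hlarge
  · exact ⟨q₀, hq₀, hq₀x, hsmall.trans le_add_self⟩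
  · obtain ⟨_, ⟨q, hq, hqx, rfl⟩, hlt⟩ :=
      exists_lt_of_lt_csSup (s := {s | ∃ P, IsDist P ∧ pm P = x ∧ s = unitMass P})
        ⟨_, q₀, hq₀, hq₀x, rfl⟩ (tsub_lt_self (hε.trans hlarge) hε)
    exact ⟨q, hq, hqx, (tsub_lt_iff_right hlarge.le).mp hlt |>.le⟩

lemma sum_mul_unitMass_le_IF
    (hμ : ∀ Q : (M →₀ ℝ≥0) →₀ ℝ≥0, IsDist Q → (∀ p ∈ Q.support, IsDist p) →
      pm (Q.sum fun p r => r • p) = pm (Finsupp.mapDomain pm Q))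
    {P : M →₀ ℝ≥0} (hP : IsDist P) {Q : M → M →₀ ℝ≥0} (hQ : ∀ x, IsDist (Q x))
    (hQpm : ∀ x, pm (Q x) = x) :
    (P.sum fun x r => r * unitMass (Q x)) ≤ IF pm (pm P) := by
  have hQsupp : ∀ p ∈ (Finsupp.mapDomain Q P).support, IsDist p := fun p hp => by
    obtain ⟨x, -, rfl⟩ := Finset.mem_image.mp (mapDomain_support hp)
    exact hQ x
  have hmix : pm (distJoin (Finsupp.mapDomain Q P)) = pm P := by
    rw [distJoin, hμ _ (hP.mapDomain Q) hQsupp, ← mapDomain_comp,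
      show pm ∘ Q = id from funext hQpm, mapDomain_id]
  calc (P.sum fun x r => r * unitMass (Q x))
      = unitMass (distJoin (Finsupp.mapDomain Q P)) := by
        rw [unitMass_distJoin, sum_mapDomain_index (fun _ => zero_mul _) (fun _ _ _ => add_mul ..)]
    _ ≤ IF pm (pm P) := hmix ▸ unitMass_le_IF pm ((hP.mapDomain Q).distJoin hQsupp)

end InvertibleFraction

theorem IF_concave_general {M : Type*} [Monoid M]
    (pm : (M →₀ ℝ≥0) → M)
    (hδ : ∀ m : M, pm (Finsupp.single m 1) = m)
    (hμ : ∀ Q : (M →₀ ℝ≥0) →₀ ℝ≥0, IsDist Q → (∀ p ∈ Q.support, IsDist p) →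
      pm (Q.sum fun p r => r • p) = pm (Finsupp.mapDomain pm Q))
    (m : M) (P : M →₀ ℝ≥0) (hP : IsDist P) (hPm : pm P = m) :
    (P.sum fun x r => r * IF pm x) ≤ IF pm m := by
  refine le_of_forall_pos_le_add fun ε hε => ?_
  choose Q hQ hQpm hQnear using fun x =>
    exists_IF_le_unitMass_add pm ⟨_, isDist_single x, hδ x⟩ hε
  calc (P.sum fun x r => r * IF pm x)
      ≤ P.sum fun x r => r * (unitMass (Q x) + ε) :=
        Finset.sum_le_sum fun x _ => mul_le_mul_right (hQnear x) _
    _ = (P.sum fun x r => r * unitMass (Q x)) + ε := by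
        simp only [mul_add, sum_add, hP.sum_mul]
    _ ≤ IF pm m + ε := by
        gcongr
        exact hPm ▸ sum_mul_unitMass_le_IF pm hμ hP hQ hQpm

/-- In a real convex monoid, for any distribution `P` with `pm(P) = m` one has
`IF(m) ≥ ∑_x P(x)·IF(x)`: the invertible fraction is concave along convex
decompositions. -/
theorem IF_concave {M : Type*} [Monoid M]
    (pm : (M →₀ ℝ≥0) → M)
    (hδ : ∀ m : M, pm (Finsupp.single m 1) = m)
    (hμ : ∀ Q : (M →₀ ℝ≥0) →₀ ℝ≥0, IsDist Q → (∀ p ∈ Q.support, IsDist p) →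
      pm (Q.sum fun p r => r • p) = pm (Finsupp.mapDomain pm Q))
    (hmul : ∀ p q : M →₀ ℝ≥0, IsDist p → IsDist q → pm (dconv q p) = pm q * pm p)
    (m : M) (P : M →₀ ℝ≥0) (hP : IsDist P) (hPm : pm P = m) :
    (P.sum fun x r => r * IF pm x) ≤ IF pm m :=
  IF_concave_general pm hδ hμ m P hP hPm
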